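/- The coefficient formula for the asymmetric additive convolution of (x-λ)^d and (x-μ)^d, namely q_d^{λ,μ}(x) = Σ_{k=0}^d x^{d-k}(-1)^k Σ_{i=0}^k C(d-i, k-i) C(d-k+i, i) λ^i μ^{k-i}, satisfies the three-term recurrence q_d^{λ,μ}(x) = (x - (λ+μ)) q_{d-1}^{λ,μ}(x) - λμ q_{d-2}^{λ,μ}(x) with q_0 = 1 and q_1 = x - (λ+μ). -/
import Mathlib


open Polynomial Finset

/-- Auxiliary: the general term of the coefficient sum. -/
noncomputable def fq (lam mu : ℝ) (d k i : ℕ) : ℝ :=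
  (((d - i).choose (k - i) * (d - k + i).choose i : ℕ) : ℝ) * lam ^ i * mu ^ (k - i)

/-- Auxiliary: the coefficient sum. -/
noncomputable def Sq (lam mu : ℝ) (d k : ℕ) : ℝ := ∑ i ∈ range (k + 1), fq lam mu d k i

/-- Auxiliary: complete homogeneous sum. -/
noncomputable def Gq (lam mu : ℝ) (d : ℕ) : ℝ := ∑ i ∈ range (d+1), lam ^ i * mu ^ (d - i)

lemma Gq_succ_l (lam mu : ℝ) (e : ℕ) : Gq lam mu (e+1) = lam * Gq lam mu e + mu ^ (e+1) := by
  rw [Gq, Gq, Finset.sum_range_succ', Finset.mul_sum]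
  simp only [pow_zero, one_mul, Nat.sub_zero]
  congr 1
  refine Finset.sum_congr rfl fun i hi => ?_
  rw [mem_range] at hi
  have : e + 1 - (i+1) = e - i := by omega
  rw [this]; ring

lemma Gq_rec (lam mu : ℝ) (e : ℕ) :
    Gq lam mu (e+2) = (lam + mu) * Gq lam mu (e+1) - lam * mu * Gq lam mu e := by
  linear_combination Gq_succ_l lam mu (e+1) - mu * Gq_succ_l lam mu e

lemma Sq_zero (lam mu : ℝ) (d : ℕ) : Sq lam mu d 0 = 1 := by
  simp [Sq, fq]

lemma Sq_one (lam mu : ℝ) (d : ℕ) : Sq lam mu (d+1) 1 = (d+1) * (lam + mu) := by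
  simp [Sq, fq, Finset.sum_range_succ]
  ring

lemma Sq_diag (lam mu : ℝ) (d : ℕ) : Sq lam mu d d = Gq lam mu d := by
  refine Finset.sum_congr rfl fun i hi => ?_
  rw [mem_range] at hi
  rw [fq]
  have h1 : d - d + i = i := by omega
  rw [h1, Nat.choose_self, Nat.choose_self]
  push_cast
  ring

lemma Sq_diag_rec (lam mu : ℝ) (e : ℕ) :
    Sq lam mu (e+2) (e+2) = (lam + mu) * Sq lam mu (e+1) (e+1) - lam * mu * Sq lam mu e e := by
  rw [Sq_diag, Sq_diag, Sq_diag]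
  exact Gq_rec lam mu e

lemma sum_split (g : ℕ → ℝ) (n : ℕ) :
    ∑ i ∈ range (n+1+1), g i = ((∑ i ∈ range n, g (i+1)) + g 0) + g (n+1) := by
  rw [Finset.sum_range_succ, Finset.sum_range_succ']

lemma Sq_main (lam mu : ℝ) (l w : ℕ) :
    Sq lam mu (l+1+1+1+w) (l+1+1)
      = Sq lam mu (l+1+1+w) (l+1+1) + lam * Sq lam mu (l+1+1+w) (l+1)
        + mu * Sq lam mu (l+1+1+w) (l+1) - lam * mu * Sq lam mu (l+1+w) l := by
  have e1 : Sq lam mu (l+1+1+1+w) (l+1+1)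
      = ((∑ i ∈ range (l+1), fq lam mu (l+1+1+1+w) (l+1+1) (i+1))
          + fq lam mu (l+1+1+1+w) (l+1+1) 0) + fq lam mu (l+1+1+1+w) (l+1+1) (l+1+1) :=
    sum_split _ _
  have e2 : Sq lam mu (l+1+1+w) (l+1+1)
      = ((∑ i ∈ range (l+1), fq lam mu (l+1+1+w) (l+1+1) (i+1))
          + fq lam mu (l+1+1+w) (l+1+1) 0) + fq lam mu (l+1+1+w) (l+1+1) (l+1+1) :=
    sum_split _ _
  have e3 : lam * Sq lam mu (l+1+1+w) (l+1)
      = (∑ i ∈ range (l+1), lam * fq lam mu (l+1+1+w) (l+1) i)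
          + lam * fq lam mu (l+1+1+w) (l+1) (l+1) := by
    rw [Sq, Finset.mul_sum, Finset.sum_range_succ]
  have e4 : mu * Sq lam mu (l+1+1+w) (l+1)
      = (∑ i ∈ range (l+1), mu * fq lam mu (l+1+1+w) (l+1) (i+1))
          + mu * fq lam mu (l+1+1+w) (l+1) 0 := by
    rw [Sq, Finset.mul_sum, Finset.sum_range_succ']
  have e5 : lam * mu * Sq lam mu (l+1+w) l
      = ∑ i ∈ range (l+1), lam * mu * fq lam mu (l+1+w) l i := by
    rw [Sq, Finset.mul_sum]
  have key : ∀ i ∈ range (l+1),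
      fq lam mu (l+1+1+1+w) (l+1+1) (i+1) + lam * mu * fq lam mu (l+1+w) l i
        = fq lam mu (l+1+1+w) (l+1+1) (i+1)
          + (lam * fq lam mu (l+1+1+w) (l+1) i + mu * fq lam mu (l+1+1+w) (l+1) (i+1)) := by
    intro i hi
    rw [mem_range] at hi
    simp only [fq]
    rw [show l+1+1+1+w - (i+1) = l - i + w + 1 + 1 from by omega,
        show l+1+1 - (i+1) = l - i + 1 from by omega,
        show l+1+1+1+w - (l+1+1) + (i+1) = w + i + 1 + 1 from by omega,
        show l+1+1+w - (i+1) = l - i + w + 1 from by omega,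
        show l+1+1+w - (l+1+1) + (i+1) = w + i + 1 from by omega,
        show l+1+1+w - i = l - i + w + 1 + 1 from by omega,
        show l+1 - i = l - i + 1 from by omega,
        show l+1+1+w - (l+1) + i = w + i + 1 from by omega,
        show l+1 - (i+1) = l - i from by omega,
        show l+1+1+w - (l+1) + (i+1) = w + i + 1 + 1 from by omega,
        show l+1+w - i = l - i + w + 1 from by omega,
        show l+1+w - l + i = w + i + 1 from by omega]
    simp only [Nat.choose_succ_succ]
    push_cast
    ring
  have hsum := Finset.sum_congr rfl key
  rw [Finset.sum_add_distrib, Finset.sum_add_distrib, Finset.sum_add_distrib] at hsum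
  have edge0 : fq lam mu (l+1+1+1+w) (l+1+1) 0
      = fq lam mu (l+1+1+w) (l+1+1) 0 + mu * fq lam mu (l+1+1+w) (l+1) 0 := by
    simp only [fq]
    rw [show l+1+1+1+w - 0 = l + 1 + w + 1 + 1 from by omega,
        show (l+1+1 : ℕ) - 0 = l + 1 + 1 from by omega,
        show l+1+1+w - 0 = l + 1 + w + 1 from by omega,
        show (l+1 : ℕ) - 0 = l + 1 from by omega]
    simp only [Nat.choose_succ_succ, Nat.choose_zero_right]
    push_cast
    ring
  have edgetop : fq lam mu (l+1+1+1+w) (l+1+1) (l+1+1)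
      = fq lam mu (l+1+1+w) (l+1+1) (l+1+1) + lam * fq lam mu (l+1+1+w) (l+1) (l+1) := by
    simp only [fq]
    rw [show l+1+1+1+w - (l+1+1) + (l+1+1) = l + w + 1 + 1 + 1 from by omega,
        show l+1+1+w - (l+1+1) + (l+1+1) = l + w + 1 + 1 from by omega,
        show l+1+1+w - (l+1) + (l+1) = l + w + 1 + 1 from by omega,
        show l+1+1+1+w - (l+1+1) = w + 1 from by omega,
        show l+1+1 - (l+1+1) = 0 from by omega,
        show l+1+1+w - (l+1+1) = w from by omega,
        show l+1+1+w - (l+1) = w + 1 from by omega,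
        show l+1 - (l+1) = 0 from by omega]
    rw [show (l+1+1 : ℕ) = l + 1 + 1 from rfl]
    simp only [Nat.choose_succ_succ, Nat.choose_zero_right]
    push_cast
    ring
  linear_combination e1 - e2 - e3 - e4 + e5 + hsum + edge0 + edgetop

/-- The coefficient formula for the asymmetric additive convolution of `(x-λ)^d` and
`(x-μ)^d`: `q_d^{λ,μ}(x) = ∑_{k=0}^d x^{d-k}(-1)^k ∑_{i=0}^k C(d-i,k-i) C(d-k+i,i) λ^i μ^{k-i}`. -/
noncomputable def qlm (lam mu : ℝ) (d : ℕ) : Polynomial ℝ :=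
  ∑ k ∈ range (d + 1), C ((-1 : ℝ) ^ k *
      ∑ i ∈ range (k + 1),
        (((d - i).choose (k - i) * (d - k + i).choose i : ℕ) : ℝ) *
          lam ^ i * mu ^ (k - i)) * X ^ (d - k)

lemma qlm_def' (lam mu : ℝ) (d : ℕ) :
    qlm lam mu d = ∑ k ∈ range (d + 1), C ((-1 : ℝ) ^ k * Sq lam mu d k) * X ^ (d - k) := rfl

lemma coeff_qlm (lam mu : ℝ) (d n : ℕ) :
    (qlm lam mu d).coeff n =
      if n ≤ d then (-1 : ℝ) ^ (d - n) * Sq lam mu d (d - n) else 0 := by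
  rw [qlm_def', Polynomial.finset_sum_coeff]
  simp only [coeff_C_mul, coeff_X_pow, mul_ite, mul_one, mul_zero]
  split_ifs with h
  · rw [Finset.sum_eq_single (d - n)]
    · rw [if_pos (by omega)]
    · intro b hb hbne
      rw [mem_range] at hb
      rw [if_neg (by omega)]
    · intro hmem
      exact absurd (mem_range.mpr (by omega)) hmem
  · refine Finset.sum_eq_zero fun b hb => ?_
    rw [mem_range] at hb
    rw [if_neg (by omega)]

/-- `q_d^{λ,μ}` satisfies the three-term recurrence
`q_d = (x - (λ+μ)) q_{d-1} - λμ q_{d-2}` with `q_0 = 1` and `q_1 = x - (λ+μ)`. -/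
theorem qlm_recurrence (lam mu : ℝ) :
    qlm lam mu 0 = 1 ∧
    qlm lam mu 1 = X - C (lam + mu) ∧
    ∀ d : ℕ, 2 ≤ d →
      qlm lam mu d
        = (X - C (lam + mu)) * qlm lam mu (d - 1) - C (lam * mu) * qlm lam mu (d - 2) := by
  refine ⟨?_, ?_, ?_⟩
  · simp [qlm]
  · rw [qlm_def', show (1:ℕ) + 1 = 0 + 1 + 1 from rfl, Finset.sum_range_succ,
      Finset.sum_range_succ, Finset.sum_range_zero]
    have h0 := Sq_zero lam mu 1
    have h1 := Sq_one lam mu 0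
    norm_num at h1
    rw [h0, h1]
    simp [map_neg, map_add]
    ring
  · intro d hd
    obtain ⟨e, rfl⟩ : ∃ e, d = e + 2 := ⟨d - 2, by omega⟩
    rw [show e + 2 - 1 = e + 1 from by omega, show e + 2 - 2 = e from by omega]
    ext n
    rcases n with _ | m
    · simp only [coeff_sub, sub_mul, coeff_C_mul, Polynomial.mul_coeff_zero, coeff_X_zero,
        zero_mul, coeff_C_zero, coeff_qlm]
      rw [if_pos (by omega), if_pos (by omega), if_pos (by omega)]
      rw [show e + 2 - 0 = e + 2 from by omega, show e + 1 - 0 = e + 1 from by omega,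
        show e - 0 = e from by omega]
      rw [Sq_diag_rec]
      ring
    · simp only [coeff_sub, sub_mul, coeff_C_mul, Polynomial.coeff_X_mul, coeff_qlm]
      split_ifs with h1 h2 h3 h4
      all_goals try (exfalso; omega)
      · -- main case: m + 1 ≤ e
        obtain ⟨j, rfl⟩ : ∃ j, e = m + 1 + j := ⟨e - (m+1), by omega⟩
        rw [show m + 1 + j + 2 - (m+1) = j + 1 + 1 from by omega,
            show m + 1 + j + 1 - m = j + 1 + 1 from by omega,
            show m + 1 + j + 1 - (m+1) = j + 1 from by omega,
            show m + 1 + j - (m+1) = j from by omega,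
            show m + 1 + j + 2 = j + 1 + 1 + 1 + m from by omega,
            show m + 1 + j + 1 = j + 1 + 1 + m from by omega,
            show m + 1 + j = j + 1 + m from by omega]
        linear_combination ((-1:ℝ))^(j+1+1) * Sq_main lam mu j m
      · -- m = e
        obtain rfl : m = e := by omega
        rw [show m + 2 - (m+1) = 1 from by omega, show m + 1 - m = 1 from by omega,
            show m + 1 - (m+1) = 0 from by omega, Sq_zero]
        rw [show (m:ℕ) + 2 = m + 1 + 1 from by omega]
        rw [Sq_one, Sq_one]
        push_cast
        ring
      · -- m = e + 1
        obtain rfl : m = e + 1 := by omega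
        rw [show e + 2 - (e+1+1) = 0 from by omega, show e + 1 - (e+1) = 0 from by omega,
            Sq_zero, Sq_zero]
        norm_num
      · ring
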